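/- The function f₀ is continuous on ℝ, square-integrable with ∫_ℝ f₀(x)² dx = -2/(α₊+α₋), twice differentiable on ℝ∖{0} with -f₀''(x) = λ₀·f₀(x) for every x ≠ 0, its one-sided derivatives f₀'(0⁺) and f₀'(0⁻) at the origin exist, and they satisfy the jump condition f₀'(0⁺) - f₀'(0⁻) = (α₊+α₋)·f₀(0). -/

import Mathlib

/-! Write `κ = (α₊+α₋)/2`, so `f₀ x = exp (κ |x|)`. Near any `x ≠ 0` the function agrees with
`exp (± κ y)`, whose second derivative is `κ² exp (± κ y)`; at the origin the one-sided slopes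
are `κ` and `-κ`, and their difference `2κ = α₊+α₋` is the jump. Since `f₀² = exp (2κ |x|)`,
the `L²` norm is two exponential integrals over half-lines, each equal to `-1/(2κ)`. -/

open MeasureTheory Set Filter Topology

section ExpMulAbs

variable (c : ℂ)

lemma hasDerivAt_cexp_mul_ofReal (x : ℝ) :
    HasDerivAt (fun y : ℝ => Complex.exp (c * y)) (c * Complex.exp (c * x)) x := by
  simpa [mul_comm] using ((Complex.ofRealCLM.hasDerivAt (x := x)).const_mul c).cexp

lemma deriv_deriv_of_eventuallyEq_cexp_mul {f : ℝ → ℂ} {x : ℝ}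
    (hf : f =ᶠ[𝓝 x] fun y : ℝ => Complex.exp (c * y)) :
    DifferentiableAt ℝ f x ∧ DifferentiableAt ℝ (deriv f) x ∧
      deriv (deriv f) x = c ^ 2 * Complex.exp (c * x) := by
  have hf' : deriv f =ᶠ[𝓝 x] fun y : ℝ => c * Complex.exp (c * y) :=
    hf.deriv.trans (Eventually.of_forall fun y => (hasDerivAt_cexp_mul_ofReal c y).deriv)
  have hf'' := (hasDerivAt_cexp_mul_ofReal c x).const_mul c
  refine ⟨(hasDerivAt_cexp_mul_ofReal c x).differentiableAt.congr_of_eventuallyEq hf,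
    hf''.differentiableAt.congr_of_eventuallyEq hf', ?_⟩
  rw [hf'.deriv_eq, hf''.deriv, sq, mul_assoc]

lemma abs_eventuallyEq_sign_mul {x : ℝ} (hx : x ≠ 0) :
    (fun y : ℝ => |y|) =ᶠ[𝓝 x] fun y => (SignType.sign x : ℝ) * y := by
  have hsign : ∀ᶠ y in 𝓝 x, SignType.sign y = SignType.sign x :=
    continuousAt_sign_of_ne_zero hx ((isOpen_discrete _).mem_nhds (mem_singleton _))
  filter_upwards [hsign] with y hy
  rw [← hy, sign_mul_self]

lemma deriv_deriv_cexp_mul_abs {x : ℝ} (hx : x ≠ 0) :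
    DifferentiableAt ℝ (fun y : ℝ => Complex.exp (c * |y|)) x ∧
      DifferentiableAt ℝ (deriv fun y : ℝ => Complex.exp (c * |y|)) x ∧
      deriv (deriv fun y : ℝ => Complex.exp (c * |y|)) x = c ^ 2 * Complex.exp (c * |x|) := by
  set ε : ℂ := ((SignType.sign x : ℝ) : ℂ)
  have hε : ε ^ 2 = 1 := by
    rcases hx.lt_or_gt with h | h <;> simp [ε, h]
  have hf : (fun y : ℝ => Complex.exp (c * |y|)) =ᶠ[𝓝 x] fun y : ℝ => Complex.exp (c * ε * y) :=
    (abs_eventuallyEq_sign_mul hx).mono fun y hy => by simp only [hy, ε]; push_cast; ring_nf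
  obtain ⟨h₁, h₂, h₃⟩ := deriv_deriv_of_eventuallyEq_cexp_mul (c * ε) hf
  refine ⟨h₁, h₂, ?_⟩
  rw [h₃, hf.eq_of_nhds, mul_pow, hε, mul_one]

lemma hasDerivWithinAt_cexp_mul_abs_Ioi :
    HasDerivWithinAt (fun y : ℝ => Complex.exp (c * |y|)) c (Ioi 0) 0 := by
  have h := (hasDerivAt_cexp_mul_ofReal c 0).hasDerivWithinAt (s := Ioi 0)
  rw [Complex.ofReal_zero, mul_zero, Complex.exp_zero, mul_one] at h
  exact h.congr (fun y (hy : 0 < y) => by simp [abs_of_pos hy]) (by simp)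

lemma hasDerivWithinAt_cexp_mul_abs_Iio :
    HasDerivWithinAt (fun y : ℝ => Complex.exp (c * |y|)) (-c) (Iio 0) 0 := by
  have h := (hasDerivAt_cexp_mul_ofReal (-c) 0).hasDerivWithinAt (s := Iio 0)
  rw [Complex.ofReal_zero, mul_zero, Complex.exp_zero, mul_one] at h
  exact h.congr (fun y (hy : y < 0) => by simp [abs_of_neg hy]) (by simp)

variable {c}

lemma integrableOn_cexp_mul_abs_Ioi (hc : c.re < 0) :
    IntegrableOn (fun x : ℝ => Complex.exp (c * |x|)) (Ioi 0) :=
  (integrableOn_exp_mul_complex_Ioi hc 0).congr_fun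
    (fun x (hx : 0 < x) => by simp [abs_of_pos hx]) measurableSet_Ioi

lemma integrableOn_cexp_mul_abs_Iic (hc : c.re < 0) :
    IntegrableOn (fun x : ℝ => Complex.exp (c * |x|)) (Iic 0) :=
  (integrableOn_exp_mul_complex_Iic (a := -c) (by simpa) 0).congr_fun
    (fun x (hx : x ≤ 0) => by simp [abs_of_nonpos hx]) measurableSet_Iic

lemma integrable_cexp_mul_abs (hc : c.re < 0) :
    Integrable (fun x : ℝ => Complex.exp (c * |x|)) := by
  simpa using (integrableOn_cexp_mul_abs_Iic hc).union (integrableOn_cexp_mul_abs_Ioi hc)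

lemma integral_cexp_mul_abs (hc : c.re < 0) :
    ∫ x : ℝ, Complex.exp (c * |x|) = -2 / c := by
  rw [← intervalIntegral.integral_Iic_add_Ioi (integrableOn_cexp_mul_abs_Iic hc)
    (integrableOn_cexp_mul_abs_Ioi hc)]
  have hIic : ∫ x in Iic (0 : ℝ), Complex.exp (c * |x|) =
      ∫ x in Iic (0 : ℝ), Complex.exp (-c * x) :=
    setIntegral_congr_fun measurableSet_Iic fun x (hx : x ≤ 0) => by simp [abs_of_nonpos hx]
  have hIoi : ∫ x in Ioi (0 : ℝ), Complex.exp (c * |x|) =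
      ∫ x in Ioi (0 : ℝ), Complex.exp (c * x) :=
    setIntegral_congr_fun measurableSet_Ioi fun x (hx : 0 < x) => by simp [abs_of_pos hx]
  rw [hIic, hIoi, integral_exp_mul_complex_Iic (by simpa), integral_exp_mul_complex_Ioi hc]
  simp only [Complex.ofReal_zero, mul_zero, Complex.exp_zero]
  ring

lemma cexp_mul_abs_sq (x : ℝ) :
    Complex.exp (c * |x|) ^ 2 = Complex.exp (2 * c * |x|) := by
  rw [← Complex.exp_nat_mul]; push_cast; ring_nf

lemma memLp_two_cexp_mul_abs (hc : c.re < 0) :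
    MemLp (fun x : ℝ => Complex.exp (c * |x|)) 2 := by
  rw [memLp_two_iff_integrable_sq_norm (by fun_prop)]
  refine (integrable_cexp_mul_abs (c := 2 * c) (by simp; linarith)).norm.congr
    (Eventually.of_forall fun x => ?_)
  simp only [← norm_pow, cexp_mul_abs_sq]

end ExpMulAbs

theorem stmt_3 (αp αm : ℂ) (hα : (αp + αm).re < 0) :
    let f₀ : ℝ → ℂ := fun x => Complex.exp ((αp + αm) * (|x| : ℝ) / 2)
    Continuous f₀ ∧
    MemLp f₀ 2 (volume : Measure ℝ) ∧
    (∫ x : ℝ, (f₀ x) ^ 2) = -2 / (αp + αm) ∧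
    (∀ x : ℝ, x ≠ 0 →
      DifferentiableAt ℝ f₀ x ∧ DifferentiableAt ℝ (deriv f₀) x ∧
        -(deriv (deriv f₀) x) = (-(αp + αm) ^ 2 / 4) * f₀ x) ∧
    ∃ Dp Dm : ℂ,
      HasDerivWithinAt f₀ Dp (Ioi (0 : ℝ)) 0 ∧ HasDerivWithinAt f₀ Dm (Iio (0 : ℝ)) 0 ∧
        Dp - Dm = (αp + αm) * f₀ 0 := by
  intro f₀
  have hf₀ : f₀ = fun x : ℝ => Complex.exp ((αp + αm) / 2 * |x|) :=
    funext fun x => by simp only [f₀, mul_div_right_comm]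
  have hc : ((αp + αm) / 2).re < 0 := by rw [Complex.div_ofNat_re]; linarith
  rw [hf₀]
  refine ⟨by fun_prop, memLp_two_cexp_mul_abs hc, ?_, fun x hx => ?_, _, _,
    hasDerivWithinAt_cexp_mul_abs_Ioi _, hasDerivWithinAt_cexp_mul_abs_Iio _, by simp⟩
  · have h2c : 2 * ((αp + αm) / 2) = αp + αm := by ring
    simp_rw [cexp_mul_abs_sq, h2c, integral_cexp_mul_abs hα]
  · obtain ⟨h₁, h₂, h₃⟩ := deriv_deriv_cexp_mul_abs _ hx
    exact ⟨h₁, h₂, by rw [h₃]; ring⟩
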